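/- For every finite set Q and every k ∈ ℕ, the induced-subtree ordering ≤_is is a well-quasi-order on the set of finite rooted unordered Q-labelled trees of height at most k: every infinite sequence T_1, T_2, … of such trees contains indices i < j with T_i ≤_is T_j. -/

import Mathlib

/-- Finite rooted ordered representation of finite rooted *unordered* labelled trees.
Unorderedness is handled by comparing trees up to permutation of children. -/
inductive STree (Q : Type) : Type
  | node (label : Q) (children : List (STree Q)) : STree Q

namespace STree

variable {Q : Type}

/-- The label of the root. -/
def rootLabel : STree Q → Q
  | node a _ => a

/-- The children of the root. -/
def children : STree Q → List (STree Q)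
  | node _ ts => ts

end STree

mutual
  /-- Number of nodes. -/
  def STree.size {Q : Type} : STree Q → ℕ
    | .node _ ts => 1 + STree.sizeL ts
  /-- Total number of nodes of a list of trees. -/
  def STree.sizeL {Q : Type} : List (STree Q) → ℕ
    | [] => 0
    | t :: ts => STree.size t + STree.sizeL ts
end

mutual
  /-- Height (a single node has height 0). -/
  def STree.height {Q : Type} : STree Q → ℕ
    | .node _ ts => STree.heightL ts
  /-- One plus the maximal height of a list of trees (0 for the empty list). -/
  def STree.heightL {Q : Type} : List (STree Q) → ℕ
    | [] => 0
    | t :: ts => max (STree.height t + 1) (STree.heightL ts)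
end

namespace STree

end STree

mutual
  /-- `TreeLe C C'` is the induced-subtree ordering `C ≤_is C'`: `C` is obtained from `C'`
  by deleting whole subtrees (equivalently, there is a root-preserving, label-preserving
  injection of the nodes of `C` into the nodes of `C'` such that two nodes are adjacent in
  `C` iff their images are adjacent in `C'`). -/
  inductive TreeLe {Q : Type} : STree Q → STree Q → Prop
    | node {a : Q} {ts us : List (STree Q)} :
        ForestLe ts us → TreeLe (.node a ts) (.node a us)

  /-- An (unordered) embedding of a list of trees into another: an injection matching each
  tree on the left with a distinct tree on the right that dominates it w.r.t. `TreeLe`. -/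
  inductive ForestLe {Q : Type} : List (STree Q) → List (STree Q) → Prop
    | nil (us : List (STree Q)) : ForestLe [] us
    | cons {t u : STree Q} {ts us : List (STree Q)} :
        TreeLe t u → ForestLe ts us → ForestLe (t :: ts) (u :: us)
    | skip {u : STree Q} {ts us : List (STree Q)} :
        ForestLe ts us → ForestLe ts (u :: us)
    | permR {ts us us' : List (STree Q)} :
        ForestLe ts us → us.Perm us' → ForestLe ts us'
end

mutual
  /-- Equality of trees as finite rooted *unordered* labelled trees. -/
  inductive TreeEquiv {Q : Type} : STree Q → STree Q → Prop
    | node {a : Q} {ts us : List (STree Q)} :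
        ForestEquiv ts us → TreeEquiv (.node a ts) (.node a us)

  /-- Lists of trees matched bijectively (up to permutation) by `TreeEquiv`. -/
  inductive ForestEquiv {Q : Type} : List (STree Q) → List (STree Q) → Prop
    | nil : ForestEquiv [] []
    | cons {t u : STree Q} {ts us : List (STree Q)} :
        TreeEquiv t u → ForestEquiv ts us → ForestEquiv (t :: ts) (u :: us)
    | permR {ts us us' : List (STree Q)} :
        ForestEquiv ts us → us.Perm us' → ForestEquiv ts us'
end

/-- `HasPath ps t` : there is a path from the root of `t` (inclusive) whose successive
labels are exactly the (nonempty) list `ps`. -/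
inductive HasPath {Q : Type} : List Q → STree Q → Prop
  | single (p : Q) (ts : List (STree Q)) : HasPath [p] (.node p ts)
  | cons (p : Q) {ps : List Q} {ts : List (STree Q)} {t : STree Q} :
      t ∈ ts → HasPath ps t → HasPath (p :: ps) (.node p ts)

/-- `mkChain q qs` is the path-shaped tree with labels `q, qs...`. -/
def mkChain {Q : Type} : Q → List Q → STree Q
  | q, [] => .node q []
  | q, r :: rest => .node q [mkChain r rest]

/-- Attach the (possibly empty) fresh chain labelled `qs` as a new child. -/
def attachChain {Q : Type} : List Q → List (STree Q) → List (STree Q)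
  | [], ts => ts
  | r :: rest, ts => mkChain r rest :: ts

/-- Application of an update transition `(p_0,…,p_i) →u (q_0,…,q_j)` (given as the two label
lists) to a configuration: fire along a root path labelled `p_0,…,p_i`, relabel the common
prefix, and either create fresh nodes labelled `q_{i+1},…,q_j` (if `i ≤ j`) or delete the
subtree rooted at `v_{j+1}` (if `j < i`). -/
inductive UStep {Q : Type} : List Q → List Q → STree Q → STree Q → Prop
  | last (p q : Q) (rest : List Q) (ts : List (STree Q)) :
      UStep [p] (q :: rest) (.node p ts) (.node q (attachChain rest ts))
  | delete (p q : Q) {ps : List Q} (hps : ps ≠ []) {t : STree Q} (l r : List (STree Q)) :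
      HasPath ps t →
      UStep (p :: ps) [q] (.node p (l ++ t :: r)) (.node q (l ++ r))
  | go (p q : Q) {ps qs : List Q} (hps : ps ≠ []) (hqs : qs ≠ []) {t t' : STree Q}
      (l r : List (STree Q)) :
      UStep ps qs t t' →
      UStep (p :: ps) (q :: qs) (.node p (l ++ t :: r)) (.node q (l ++ t' :: r))

/-- Application of a reset transition `(p_0,…,p_i) →r,x (q_0,…,q_i)` to a configuration:
fire along a root path labelled `p_0,…,p_i`, relabel it to `q_0,…,q_i`, and delete every
subtree rooted at a child of the last path node whose label is `x`. -/
inductive RStep {Q : Type} [DecidableEq Q] : List Q → Q → List Q → STree Q → STree Q → Prop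
  | last (p q x : Q) (ts : List (STree Q)) :
      RStep [p] x [q] (.node p ts) (.node q (ts.filter (fun t => t.rootLabel ≠ x)))
  | go (p q x : Q) {ps qs : List Q} (hps : ps ≠ []) {t t' : STree Q} (l r : List (STree Q)) :
      RStep ps x qs t t' →
      RStep (p :: ps) x (q :: qs) (.node p (l ++ t :: r)) (.node q (l ++ t' :: r))

/-- A transition of a `k`-NRCS : either an update transition or a reset transition,
presented by its label lists. -/
inductive NTrans (Q : Type) : Type
  | upd (ps qs : List Q) : NTrans Q
  | rst (ps : List Q) (x : Q) (qs : List Q) : NTrans Q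

/-- A `k`-NRCS `(Q, δ_u, δ_r)` : a finite set of update transitions
`δ_u ⊆ ⋃_{1 ≤ i,j ≤ k+1} Q^i × Q^j` and a finite set of reset transitions
`δ_r ⊆ ⋃_{1 ≤ i ≤ k} Q^i × Q × Q^i` (the state set is the ambient type `Q`). -/
structure NRCS (Q : Type) [DecidableEq Q] (k : ℕ) where
  update : Finset (List Q × List Q)
  reset : Finset (List Q × Q × List Q)
  update_wf : ∀ t ∈ update, 1 ≤ t.1.length ∧ t.1.length ≤ k + 1 ∧
      1 ≤ t.2.length ∧ t.2.length ≤ k + 1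
  reset_wf : ∀ t ∈ reset, 1 ≤ t.1.length ∧ t.1.length ≤ k ∧ t.2.2.length = t.1.length

namespace NRCS

variable {Q : Type} [DecidableEq Q] {k : ℕ}

/-- Membership of a transition in an NRCS. -/
def hasTrans (N : NRCS Q k) : NTrans Q → Prop
  | .upd ps qs => (ps, qs) ∈ N.update
  | .rst ps x qs => (ps, x, qs) ∈ N.reset

/-- `C →_t C'` : a step via the particular transition `t`. -/
def TransStep : NTrans Q → STree Q → STree Q → Prop
  | .upd ps qs, C, C' => UStep ps qs C C'
  | .rst ps x qs, C, C' => RStep ps x qs C C'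

/-- The step relation `C → C'` of the NRCS `N`. -/
def Step (N : NRCS Q k) (C C' : STree Q) : Prop :=
  ∃ t : NTrans Q, N.hasTrans t ∧ TransStep t C C'

/-- Reachability `C →* C'` (reflexive-transitive closure of the step relation). -/
def Reaches (N : NRCS Q k) : STree Q → STree Q → Prop :=
  Relation.ReflTransGen N.Step

/-- The lossy step relation: first delete some whole subtrees, then take a standard step. -/
def LossyStep (N : NRCS Q k) (C D : STree Q) : Prop :=
  ∃ C₀ : STree Q, TreeLe C₀ C ∧ N.Step C₀ D

/-- Lossy reachability. -/
def LossyReaches (N : NRCS Q k) : STree Q → STree Q → Prop :=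
  Relation.ReflTransGen N.LossyStep

end NRCS

/-!
Induction on the height bound. A tree of height `< k + 1` is a root label together with a list
of children of height `< k`. Labels are compared by equality, a well-quasi-order since `Q` is
finite, and lists of children by `SublistForall₂ TreeLe`, a well-quasi-order by Higman's lemma.
Trees whose components are related in this product order are related by `TreeLe`; Higman's
lemma needs `TreeLe` to be transitive, which follows from describing `ForestLe` as a pointwise
`TreeLe`-domination of a sub-permutation.
-/

open List

namespace List.Forall₂

variable {α β γ : Type*}

theorem exists_sublist_of_sublist_left {R : α → β → Prop} {l₁ l₂ : List α} {m : List β}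
    (h : Forall₂ R l₂ m) (hs : l₁ <+ l₂) : ∃ m', m' <+ m ∧ Forall₂ R l₁ m' := by
  induction hs generalizing m with
  | slnil => exact ⟨[], nil_sublist _, .nil⟩
  | cons _ _ ih =>
    cases h with
    | cons _ h =>
      obtain ⟨m', hm', h'⟩ := ih h
      exact ⟨m', hm'.cons _, h'⟩
  | cons_cons _ _ ih =>
    cases h with
    | cons hab h =>
      obtain ⟨m', hm', h'⟩ := ih h
      exact ⟨_, hm'.cons_cons _, .cons hab h'⟩

theorem exists_subperm_of_subperm_left {R : α → β → Prop} {l₁ l₂ : List α} {m : List β}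
    (h : Forall₂ R l₂ m) (hs : l₁ <+~ l₂) : ∃ m', m' <+~ m ∧ Forall₂ R l₁ m' := by
  obtain ⟨l, hl, hsub⟩ := hs
  obtain ⟨m₁, hm₁, h₁⟩ := h.exists_sublist_of_sublist_left hsub
  obtain ⟨m₂, h₂, hm₂⟩ := perm_comp_forall₂ hl.symm h₁
  exact ⟨m₂, ⟨m₁, hm₂.symm, hm₁⟩, h₂⟩

theorem trans_of_forall_mem {R : α → β → Prop} {S : β → γ → Prop} {T : α → γ → Prop}
    {l₁ : List α} {l₂ : List β} {l₃ : List γ}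
    (hRS : ∀ b ∈ l₂, ∀ a c, R a b → S b c → T a c)
    (h₁ : Forall₂ R l₁ l₂) (h₂ : Forall₂ S l₂ l₃) : Forall₂ T l₁ l₃ := by
  induction h₁ generalizing l₃ with
  | nil => cases h₂; exact .nil
  | cons hab _ ih =>
    cases h₂ with
    | cons hbc h₂' =>
      exact .cons (hRS _ mem_cons_self _ _ hab hbc)
        (ih (fun b hb => hRS b (mem_cons_of_mem _ hb)) h₂')

end List.Forall₂

theorem exists_forall₂_subperm_trans {α : Type*} {R : α → α → Prop} {l m n : List α}
    (hR : ∀ b ∈ m, ∀ a c, R a b → R b c → R a c)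
    (hlm : ∃ m₀, Forall₂ R l m₀ ∧ m₀ <+~ m) (hmn : ∃ n₀, Forall₂ R m n₀ ∧ n₀ <+~ n) :
    ∃ n₀, Forall₂ R l n₀ ∧ n₀ <+~ n := by
  obtain ⟨m₀, hlm₀, hm₀⟩ := hlm
  obtain ⟨n₀, hmn₀, hn₀⟩ := hmn
  obtain ⟨n₁, hn₁, hm₀n₁⟩ := hmn₀.exists_subperm_of_subperm_left hm₀
  exact ⟨n₁, hlm₀.trans_of_forall_mem (fun b hb => hR b (hm₀.subset hb)) hm₀n₁,
    hn₁.trans hn₀⟩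

variable {Q : Type}

mutual
theorem TreeLe.refl : (t : STree Q) → TreeLe t t
  | .node _ ts => .node (ForestLe.refl ts)

theorem ForestLe.refl : (ts : List (STree Q)) → ForestLe ts ts
  | [] => .nil []
  | t :: ts => .cons (TreeLe.refl t) (ForestLe.refl ts)
end

theorem forestLe_of_forall₂_of_sublist {ts us₀ us : List (STree Q)}
    (h : Forall₂ TreeLe ts us₀) (hs : us₀ <+ us) : ForestLe ts us := by
  induction hs generalizing ts with
  | slnil => rw [forall₂_nil_right_iff.1 h]; exact .nil []
  | cons _ _ ih => exact .skip (ih h)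
  | cons_cons _ _ ih =>
    obtain ⟨_, _, htu, h', rfl⟩ := forall₂_cons_right_iff.1 h
    exact .cons htu (ih h')

theorem forestLe_iff_exists_forall₂_subperm {ts us : List (STree Q)} :
    ForestLe ts us ↔ ∃ us₀, Forall₂ TreeLe ts us₀ ∧ us₀ <+~ us := by
  constructor
  · intro h
    induction h using ForestLe.rec (motive_1 := fun _ _ _ => True) with
    | node => trivial
    | nil => exact ⟨[], .nil, nil_subperm⟩
    | cons htu _ _ ih =>
      obtain ⟨us₀, h, hs⟩ := ih
      exact ⟨_, .cons htu h, (subperm_cons _).2 hs⟩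
    | skip _ ih =>
      obtain ⟨us₀, h, hs⟩ := ih
      exact ⟨us₀, h, hs.cons_right _⟩
    | permR _ hp ih =>
      obtain ⟨us₀, h, hs⟩ := ih
      exact ⟨us₀, h, hs.trans hp.subperm⟩
  · rintro ⟨us₀, h, l, hl, hs⟩
    obtain ⟨d, hd⟩ := hs.exists_perm_append
    exact (forestLe_of_forall₂_of_sublist h (sublist_append_left us₀ d)).permR
      ((hl.symm.append_right d).trans hd.symm)

theorem TreeLe.trans : ∀ {t u v : STree Q}, TreeLe t u → TreeLe u v → TreeLe t v
  | .node _ _, .node _ us, .node _ _, .node htu, .node huv =>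
    -- termination: the recursive call is only made on children `x ∈ us`
    .node <| forestLe_iff_exists_forall₂_subperm.2 <| exists_forall₂_subperm_trans
      (fun _ _ _ _ h₁ h₂ => h₁.trans h₂)
      (forestLe_iff_exists_forall₂_subperm.1 htu) (forestLe_iff_exists_forall₂_subperm.1 huv)
termination_by _ u => u

instance : IsPreorder (STree Q) TreeLe where
  refl := TreeLe.refl
  trans _ _ _ := TreeLe.trans

theorem STree.height_lt_of_mem_children {t c : STree Q} (hc : c ∈ t.children) :
    c.height < t.height := by
  obtain ⟨a, ts⟩ := t
  induction ts with
  | nil => cases hc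
  | cons u us ih =>
    simp only [STree.children, mem_cons] at hc
    simp only [STree.height, STree.heightL] at ih ⊢
    rcases hc with rfl | hc
    · omega
    · have := ih hc; omega

theorem partiallyWellOrderedOn_treeLe_of_children [Finite Q] {s : Set (STree Q)}
    (hs : s.PartiallyWellOrderedOn TreeLe) :
    {t : STree Q | ∀ c ∈ t.children, c ∈ s}.PartiallyWellOrderedOn TreeLe := by
  have hpairs := (Set.finite_univ (α := Q)).partiallyWellOrderedOn (r := (· = ·)) |>.prod
    (hs.partiallyWellOrderedOn_sublistForall₂ TreeLe)
  refine (hpairs.image_of_monotone_on (f := fun p => STree.node p.1 p.2) ?_).mono ?_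
  · rintro ⟨a, ts⟩ - ⟨_, us⟩ - ⟨rfl, hts⟩
    obtain ⟨us₀, h, hs⟩ := sublistForall₂_iff.1 hts
    exact .node (forestLe_of_forall₂_of_sublist h hs)
  · rintro ⟨a, ts⟩ ht
    exact ⟨(a, ts), ⟨trivial, ht⟩, rfl⟩

theorem partiallyWellOrderedOn_treeLe_height_lt [Finite Q] (k : ℕ) :
    {t : STree Q | t.height < k}.PartiallyWellOrderedOn TreeLe := by
  induction k with
  | zero => exact (Set.partiallyWellOrderedOn_empty _).mono fun t ht => absurd ht (by simp)
  | succ k ih =>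
    refine (partiallyWellOrderedOn_treeLe_of_children ih).mono
      fun t (ht : t.height < k + 1) c hc => ?_
    exact (STree.height_lt_of_mem_children hc).trans_le (Nat.le_of_lt_succ ht)

/-- Wqo of the induced-subtree ordering on bounded-height labelled trees:
for every finite set `Q` and every `k ∈ ℕ`, the induced-subtree ordering `≤_is` is a
well-quasi-order on the set of finite rooted unordered `Q`-labelled trees of height at most
`k`: every infinite sequence `T_1, T_2, …` of such trees contains indices `i < j` with
`T_i ≤_is T_j`. -/
theorem treeLe_wqo_of_bounded_height (Q : Type) [Finite Q] (k : ℕ)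
    (T : ℕ → STree Q) (hT : ∀ n, (T n).height ≤ k) :
    ∃ i j : ℕ, i < j ∧ TreeLe (T i) (T j) :=
  (partiallyWellOrderedOn_treeLe_height_lt (k + 1)).exists_lt fun n => Nat.lt_succ_of_le (hT n)
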